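/- arXiv:math/9204211 — 3 statements merged into one kernel-verified Lean document; each statement's English description precedes it below -/
import Mathlib

section
/- Let n = 2^k and let A = n^{-1/2}(ε_{ij}) be a symmetric orthogonal matrix with entries ε_{ij} = ±1 divided by √n. Let M ⊂ ℓ_∞^{2n} be the span of f_i = (e_i, Ae_i), i = 1,…,n, with the sup norm. Then the projection constant of M relative to ℓ_∞^{2n} (equivalently, the absolute projection constant of M) is at least √n / 2. -/
open scoped BigOperators

/-- Let `n = 2^k`, let `A = n^{-1/2} (ε_{ij})` be a symmetric orthogonal
matrix with `ε_{ij} = ±1`, and let `M ⊆ ℓ_∞^{2n}` be the span of the vectors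
`f i = (e i, A e i)` (sup norm).  Then every bounded projection of `ℓ_∞^{2n}` onto `M`
has norm at least `√n / 2`; i.e. the (relative, hence absolute) projection constant of
`M` is at least `√n / 2`. -/
theorem stmt_11 (k n : ℕ) (hn : n = 2 ^ k)
    (ε : Matrix (Fin n) (Fin n) ℝ) (hε : ∀ i j, ε i j = 1 ∨ ε i j = -1) (hεsym : ε.IsSymm)
    (A : Matrix (Fin n) (Fin n) ℝ) (hA : A = ((n : ℝ) ^ (-(1/2 : ℝ))) • ε)
    (horth : A * A = 1)
    (f : Fin n → (Fin n ⊕ Fin n → ℝ))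
    (hf : ∀ i, f i = Sum.elim (fun j => if j = i then (1 : ℝ) else 0) (fun j => A j i))
    (M : Submodule ℝ (Fin n ⊕ Fin n → ℝ)) (hM : M = Submodule.span ℝ (Set.range f))
    (P : (Fin n ⊕ Fin n → ℝ) →L[ℝ] (Fin n ⊕ Fin n → ℝ))
    (hPrange : ∀ x, P x ∈ M) (hPfix : ∀ x ∈ M, P x = x) :
    Real.sqrt n / 2 ≤ ‖P‖ := by
  classical
  -- the standard basis
  set e : (Fin n ⊕ Fin n) → (Fin n ⊕ Fin n → ℝ) := fun t s => if s = t then 1 else 0 with he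
  have hn1 : 1 ≤ n := by rw [hn]; exact Nat.one_le_two_pow
  have hnR : (0:ℝ) < n := by exact_mod_cast hn1
  have hsq : Real.sqrt n * Real.sqrt n = n := Real.mul_self_sqrt hnR.le
  have hsqpos : 0 < Real.sqrt n := Real.sqrt_pos.mpr hnR
  -- |A i j| = (√n)⁻¹
  have hAabs : ∀ i j, |A i j| = (Real.sqrt n)⁻¹ := by
    intro i j
    have h2 : ((n:ℝ) ^ (-(1/2:ℝ))) = (Real.sqrt n)⁻¹ := by
      rw [Real.rpow_neg (by positivity), ← Real.sqrt_eq_rpow]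
    have h1 : |ε i j| = 1 := by rcases hε i j with h | h <;> simp [h]
    rw [hA]
    simp only [Matrix.smul_apply, smul_eq_mul, abs_mul, h1, mul_one, h2,
      abs_of_nonneg (inv_nonneg.mpr (Real.sqrt_nonneg _))]
  -- elements of M satisfy the "row" relation
  have hMrow : ∀ m ∈ M, ∀ j, m (Sum.inr j) = ∑ i, A j i * m (Sum.inl i) := by
    intro m hm
    rw [hM] at hm
    induction hm using Submodule.span_induction with
    | mem x hx =>
      obtain ⟨i, rfl⟩ := hx
      intro j
      rw [hf i]
      simp [mul_ite, Finset.sum_ite_eq']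
    | zero => intro j; simp
    | add x y hx hy ihx ihy =>
      intro j
      simp only [Pi.add_apply, ihx j, ihy j, mul_add, Finset.sum_add_distrib]
    | smul c x hx ih =>
      intro j
      simp only [Pi.smul_apply, smul_eq_mul, ih j, Finset.mul_sum]
      exact Finset.sum_congr rfl fun i _ => by ring
  -- and the "column" relation (using A * A = 1)
  have hMcol : ∀ m ∈ M, ∀ i, m (Sum.inl i) = ∑ j, A i j * m (Sum.inr j) := by
    intro m hm i
    have : ∑ j, A i j * m (Sum.inr j) = ∑ j, ∑ l, A i j * (A j l * m (Sum.inl l)) := by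
      refine Finset.sum_congr rfl fun j _ => ?_
      rw [hMrow m hm j, Finset.mul_sum]
    rw [this]
    have hswap : ∑ j, ∑ l, A i j * (A j l * m (Sum.inl l))
        = ∑ l, (∑ j, A i j * A j l) * m (Sum.inl l) := by
      rw [Finset.sum_comm]
      exact Finset.sum_congr rfl fun l _ => by rw [Finset.sum_mul]; exact Finset.sum_congr rfl fun j _ => by ring
    rw [hswap]
    have hone : ∀ l, (∑ j, A i j * A j l) = if i = l then (1:ℝ) else 0 := by
      intro l
      have : (A * A) i l = if i = l then (1:ℝ) else 0 := by rw [horth, Matrix.one_apply]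
      rw [← this, Matrix.mul_apply]
    simp only [hone, ite_mul, one_mul, zero_mul, Finset.sum_ite_eq, Finset.mem_univ, if_true]
  -- row-sum bound from the operator norm
  have hrow : ∀ s : Fin n ⊕ Fin n, (∑ t : Fin n ⊕ Fin n, |(P (e t)) s|) ≤ ‖P‖ := by
    intro s
    set x : Fin n ⊕ Fin n → ℝ := fun t => if 0 ≤ (P (e t)) s then 1 else -1 with hx
    have hxnorm : ‖x‖ ≤ 1 := by
      refine (pi_norm_le_iff_of_nonneg zero_le_one).mpr fun t => ?_
      by_cases h : 0 ≤ (P (e t)) s <;> simp [hx, h]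
    have hxe : x = ∑ t, x t • e t := by
      funext u
      rw [Finset.sum_apply]
      simp only [Pi.smul_apply, smul_eq_mul, he, mul_ite, mul_one, mul_zero]
      rw [Finset.sum_ite_eq]
      simp
    have h1 : (P x) s = ∑ t, |(P (e t)) s| := by
      conv_lhs => rw [hxe]
      rw [map_sum, Finset.sum_apply]
      refine Finset.sum_congr rfl fun t _ => ?_
      simp only [ContinuousLinearMap.map_smul, Pi.smul_apply, smul_eq_mul]
      by_cases h : 0 ≤ (P (e t)) s
      · simp [hx, h, abs_of_nonneg h]
      · simp [hx, h, abs_of_neg (lt_of_not_ge h)]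
    have h2 : |(P x) s| ≤ ‖P x‖ := by
      rw [← Real.norm_eq_abs]; exact norm_le_pi_norm (P x) s
    have h3 : ‖P x‖ ≤ ‖P‖ * ‖x‖ := P.le_opNorm x
    have h4 : ‖P‖ * ‖x‖ ≤ ‖P‖ * 1 := mul_le_mul_of_nonneg_left hxnorm (norm_nonneg P)
    calc ∑ t, |(P (e t)) s| = (P x) s := h1.symm
      _ ≤ |(P x) s| := le_abs_self _
      _ ≤ ‖P‖ := by linarith
  have habsnn : ∀ (g : Fin n ⊕ Fin n → ℝ), (0:ℝ) ≤ ∑ j : Fin n, |g (Sum.inr j)| :=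
    fun g => Finset.sum_nonneg fun _ _ => abs_nonneg _
  have hrowL : ∀ s, (∑ i : Fin n, |(P (e (Sum.inl i))) s|) ≤ ‖P‖ := by
    intro s
    have h := hrow s
    rw [Fintype.sum_sum_type] at h
    have h2 : (0:ℝ) ≤ ∑ j : Fin n, |(P (e (Sum.inr j))) s| :=
      Finset.sum_nonneg fun _ _ => abs_nonneg _
    linarith
  have hrowR : ∀ s, (∑ j : Fin n, |(P (e (Sum.inr j))) s|) ≤ ‖P‖ := by
    intro s
    have h := hrow s
    rw [Fintype.sum_sum_type] at h
    have h2 : (0:ℝ) ≤ ∑ i : Fin n, |(P (e (Sum.inl i))) s| :=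
      Finset.sum_nonneg fun _ _ => abs_nonneg _
    linarith
  -- decomposition of f i in the standard basis
  have hfdecomp : ∀ i, f i = e (Sum.inl i) + ∑ j, A j i • e (Sum.inr j) := by
    intro i
    funext s
    rw [Pi.add_apply, Finset.sum_apply]
    rcases s with l | r
    · simp [hf i, he]
    · simp only [hf i, Sum.elim_inr, he, Pi.smul_apply, smul_eq_mul, mul_ite, mul_one, mul_zero]
      simp [Finset.sum_ite_eq']
  have hfM : ∀ i, f i ∈ M := fun i => hM ▸ Submodule.subset_span ⟨i, rfl⟩
  -- the trace identity
  have hmain : (n:ℝ) = (∑ i, (P (e (Sum.inl i))) (Sum.inl i))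
      + ∑ i, ∑ j, A j i * (P (e (Sum.inr j))) (Sum.inl i) := by
    have h0 : ∀ i : Fin n, (1:ℝ) = (P (e (Sum.inl i))) (Sum.inl i)
        + ∑ j, A j i * (P (e (Sum.inr j))) (Sum.inl i) := by
      intro i
      have h1 : P (f i) = f i := hPfix _ (hfM i)
      have h2 : (f i) (Sum.inl i) = 1 := by simp [hf i]
      have h3 : (P (f i)) (Sum.inl i) = (P (e (Sum.inl i))) (Sum.inl i)
          + ∑ j, A j i * (P (e (Sum.inr j))) (Sum.inl i) := by
        conv_lhs => rw [hfdecomp i]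
        rw [map_add, map_sum, Pi.add_apply, Finset.sum_apply]
        refine congrArg _ (Finset.sum_congr rfl fun j _ => ?_)
        simp
      rw [← h3, h1, h2]
    calc (n:ℝ) = ∑ _i : Fin n, (1:ℝ) := by simp
      _ = _ := by
        rw [Finset.sum_congr rfl fun i _ => h0 i, Finset.sum_add_distrib]
  -- bound on the first term
  have hT1 : (∑ i, (P (e (Sum.inl i))) (Sum.inl i)) ≤ Real.sqrt n * ‖P‖ := by
    have h1 : ∀ i : Fin n, (P (e (Sum.inl i))) (Sum.inl i)
        = ∑ j, A i j * (P (e (Sum.inl i))) (Sum.inr j) :=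
      fun i => hMcol _ (hPrange _) i
    calc ∑ i, (P (e (Sum.inl i))) (Sum.inl i)
        = ∑ i, ∑ j, A i j * (P (e (Sum.inl i))) (Sum.inr j) :=
          Finset.sum_congr rfl fun i _ => h1 i
      _ ≤ ∑ i, ∑ j, (Real.sqrt n)⁻¹ * |(P (e (Sum.inl i))) (Sum.inr j)| := by
          refine Finset.sum_le_sum fun i _ => Finset.sum_le_sum fun j _ => ?_
          calc A i j * (P (e (Sum.inl i))) (Sum.inr j)
              ≤ |A i j * (P (e (Sum.inl i))) (Sum.inr j)| := le_abs_self _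
            _ = (Real.sqrt n)⁻¹ * |(P (e (Sum.inl i))) (Sum.inr j)| := by
                rw [abs_mul, hAabs]
      _ = (Real.sqrt n)⁻¹ * ∑ j, ∑ i, |(P (e (Sum.inl i))) (Sum.inr j)| := by
          rw [Finset.sum_comm]
          simp [Finset.mul_sum]
      _ ≤ (Real.sqrt n)⁻¹ * ∑ _j : Fin n, ‖P‖ := by
          refine mul_le_mul_of_nonneg_left ?_ (inv_nonneg.mpr (Real.sqrt_nonneg _))
          exact Finset.sum_le_sum fun j _ => hrowL (Sum.inr j)
      _ = (Real.sqrt n)⁻¹ * ((n:ℝ) * ‖P‖) := by rw [Finset.sum_const]; simp [mul_assoc]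
      _ = Real.sqrt n * ‖P‖ := by
          field_simp
          linear_combination (-‖P‖) * hsq
  -- bound on the second term
  have hT2 : (∑ i, ∑ j, A j i * (P (e (Sum.inr j))) (Sum.inl i)) ≤ Real.sqrt n * ‖P‖ := by
    calc ∑ i, ∑ j, A j i * (P (e (Sum.inr j))) (Sum.inl i)
        ≤ ∑ i, ∑ j, (Real.sqrt n)⁻¹ * |(P (e (Sum.inr j))) (Sum.inl i)| := by
          refine Finset.sum_le_sum fun i _ => Finset.sum_le_sum fun j _ => ?_
          calc A j i * (P (e (Sum.inr j))) (Sum.inl i)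
              ≤ |A j i * (P (e (Sum.inr j))) (Sum.inl i)| := le_abs_self _
            _ = (Real.sqrt n)⁻¹ * |(P (e (Sum.inr j))) (Sum.inl i)| := by
                rw [abs_mul, hAabs]
      _ = ∑ i, (Real.sqrt n)⁻¹ * ∑ j, |(P (e (Sum.inr j))) (Sum.inl i)| :=
          Finset.sum_congr rfl fun i _ => (Finset.mul_sum _ _ _).symm
      _ ≤ ∑ _i : Fin n, (Real.sqrt n)⁻¹ * ‖P‖ := by
          refine Finset.sum_le_sum fun i _ => ?_
          exact mul_le_mul_of_nonneg_left (hrowR (Sum.inl i)) (inv_nonneg.mpr (Real.sqrt_nonneg _))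
      _ = (n:ℝ) * ((Real.sqrt n)⁻¹ * ‖P‖) := by rw [Finset.sum_const]; simp
      _ = Real.sqrt n * ‖P‖ := by
          field_simp
          linear_combination (-‖P‖) * hsq
  -- conclude
  have hfinal : (n:ℝ) ≤ 2 * (Real.sqrt n * ‖P‖) := by linarith [hmain, hT1, hT2]
  rw [← hsq] at hfinal
  nlinarith [hsqpos]
end

section
/- Let (a_{kn})_{k,n≥1} be a Köthe matrix with all a_{kn} > 0 and a_{k+1,n} ≥ a_{kn}, let (r_k) be positive reals with r_k < r_{k+1}, and define b_n = max_{1≤k≤n} 2^{-k} r_k^{-1} a_{kn}. Then for every scalar sequence (x_n): Σ_{n=1}^∞ b_n |x_n| ≤ sup_{k∈ℕ} ( r_k^{-1} Σ_{n=1}^∞ a_{kn} |x_n| ), where both sides may be +∞. -/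
open scoped ENNReal

/-
The maximum defining `b n` is attained at some `k ≤ n`, so `b n |x n|` is one term of
`∑ₖ 2^{-(k+1)} (r k)⁻¹ a k n |x n|`. Summing over `n` and exchanging the sums bounds the left
side by `(∑ₖ 2^{-(k+1)}) · sup_k (r k)⁻¹ ∑ₙ a k n |x n|`, and the geometric weights sum to `1`.
-/

namespace ENNReal

theorem ofReal_two_zpow_neg_natCast_add_one (k : ℕ) :
    ENNReal.ofReal ((2 : ℝ) ^ (-((k : ℤ) + 1))) = 2 ^ (-1 - k : ℤ) := by
  rw [show -1 - (k : ℤ) = -((k + 1 : ℕ) : ℤ) by push_cast; ring]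
  push_cast
  rw [zpow_neg, ENNReal.zpow_neg, ← Nat.cast_one (R := ℤ), ← Nat.cast_add, zpow_natCast,
    zpow_natCast, ENNReal.ofReal_inv_of_pos (by positivity), ENNReal.ofReal_pow zero_le_two,
    ENNReal.ofReal_ofNat]

theorem tsum_le_tsum_mul_iSup_tsum {ι κ : Type*} (w : κ → ℝ≥0∞) (f : κ → ι → ℝ≥0∞)
    (g : ι → ℝ≥0∞) (hg : ∀ i, g i ≤ ∑' k, w k * f k i) :
    ∑' i, g i ≤ (∑' k, w k) * ⨆ k, ∑' i, f k i :=
  calc ∑' i, g i ≤ ∑' i, ∑' k, w k * f k i := ENNReal.tsum_le_tsum hg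
    _ = ∑' k, w k * ∑' i, f k i := by simp only [ENNReal.tsum_comm (α := ι), ENNReal.tsum_mul_left]
    _ ≤ ∑' k, w k * ⨆ k, ∑' i, f k i := by gcongr; exact le_iSup (fun k => ∑' i, f k i) _
    _ = (∑' k, w k) * ⨆ k, ∑' i, f k i := ENNReal.tsum_mul_right

end ENNReal

theorem stmt_15_general (a : ℕ → ℕ → ℝ)
    (r : ℕ → ℝ) (hr : ∀ k, 0 < r k)
    (b : ℕ → ℝ)
    (hb : ∀ n, b n = (Finset.range (n + 1)).sup' Finset.nonempty_range_add_one
        (fun k => (2 : ℝ) ^ (-((k : ℤ) + 1)) * (r k)⁻¹ * a k n))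
    (x : ℕ → ℝ) :
    ∑' n : ℕ, ENNReal.ofReal (b n * |x n|)
      ≤ ⨆ k : ℕ, ENNReal.ofReal ((r k)⁻¹) * ∑' n : ℕ, ENNReal.ofReal (a k n * |x n|) := by
  have hterm : ∀ n, ENNReal.ofReal (b n * |x n|) ≤ ∑' k : ℕ, (2 : ℝ≥0∞) ^ (-1 - k : ℤ) *
      (ENNReal.ofReal (r k)⁻¹ * ENNReal.ofReal (a k n * |x n|)) := by
    intro n
    obtain ⟨k, -, hk⟩ := Finset.exists_mem_eq_sup' Finset.nonempty_range_add_one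
      (fun k => (2 : ℝ) ^ (-((k : ℤ) + 1)) * (r k)⁻¹ * a k n)
    refine le_of_eq_of_le ?_ (ENNReal.le_tsum k)
    rw [hb n, hk, mul_assoc, mul_assoc, ENNReal.ofReal_mul (by positivity),
      ENNReal.ofReal_mul (inv_nonneg.2 (hr k).le), ENNReal.ofReal_two_zpow_neg_natCast_add_one]
  calc _ ≤ _ := ENNReal.tsum_le_tsum_mul_iSup_tsum _ _ _ hterm
    _ = _ := by simp only [ENNReal.tsum_two_zpow_neg_add_one, one_mul, ENNReal.tsum_mul_left]

/-- Let `(a k n)` be a Köthe matrix with positive entries, nondecreasing in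
`k`, let `(r k)` be positive strictly increasing reals, and set
`b n = max_{k ≤ n} 2^{-(k+1)} (r k)⁻¹ (a k n)` (indices are 0-based here, matching the
1-based statement `b_n = max_{1 ≤ k ≤ n} 2^{-k} r_k⁻¹ a_{kn}`).  Then for every scalar
sequence `x`, `∑ₙ b n |x n| ≤ sup_k ( (r k)⁻¹ ∑ₙ a k n |x n| )`, both sides computed in
`[0, ∞]`. -/
theorem stmt_15 (a : ℕ → ℕ → ℝ) (ha : ∀ k n, 0 < a k n)
    (hamono : ∀ k n, a k n ≤ a (k + 1) n)
    (r : ℕ → ℝ) (hr : ∀ k, 0 < r k) (hrmono : ∀ k, r k < r (k + 1))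
    (b : ℕ → ℝ)
    (hb : ∀ n, b n = (Finset.range (n + 1)).sup' Finset.nonempty_range_add_one
        (fun k => (2 : ℝ) ^ (-((k : ℤ) + 1)) * (r k)⁻¹ * a k n))
    (x : ℕ → ℝ) :
    ∑' n : ℕ, ENNReal.ofReal (b n * |x n|)
      ≤ ⨆ k : ℕ, ENNReal.ofReal ((r k)⁻¹) * ∑' n : ℕ, ENNReal.ofReal (a k n * |x n|) :=
  stmt_15_general a r hr b hb x
end

section
/- Let X, Y, Z, W be Banach spaces with Z separable, let T ∈ L(X, Y) be compact, and suppose: (a) T factors densely through X × Z as T = S⁽²⁾S⁽¹⁾ with S⁽¹⁾ ∈ L(X, X × Z) having dense range and S⁽²⁾ ∈ L(X × Z, Y) compact; (b) the restriction of S⁽²⁾ to X factors densely through W as R⁽²⁾R⁽¹⁾ with R⁽¹⁾ ∈ L(X, W) having dense range. Then T factors densely through W × Z: defining T⁽¹⁾ = (R⁽¹⁾P_X + P_Z)S⁽¹⁾ and T⁽²⁾ = R⁽²⁾P_W + S⁽²⁾P_Z (where P_X, P_Z, P_W denote the coordinate projections), one has T = T⁽²⁾T⁽¹⁾ and T⁽¹⁾(X)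 is dense in W × Z. -/
/-- Lemma 3.7: Suppose the compact operator `T : X → Y` factors densely
through `X × Z` as `T = S₂ ∘ S₁` with `S₁` of dense range and `S₂` compact, and the
restriction of `S₂` to `X` factors densely through `W` as `R₂ ∘ R₁`.  Then with
`T₁ = (R₁ P_X + P_Z) S₁ : X → W × Z` and `T₂ = R₂ P_W + S₂ P_Z : W × Z → Y` one has
`T = T₂ ∘ T₁` and `T₁(X)` is dense in `W × Z`. -/
theorem stmt_19 {X Y Z W : Type*}
    [NormedAddCommGroup X] [NormedSpace ℝ X] [CompleteSpace X]
    [NormedAddCommGroup Y] [NormedSpace ℝ Y] [CompleteSpace Y]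
    [NormedAddCommGroup Z] [NormedSpace ℝ Z] [CompleteSpace Z]
    [TopologicalSpace.SeparableSpace Z]
    [NormedAddCommGroup W] [NormedSpace ℝ W] [CompleteSpace W]
    (T : X →L[ℝ] Y) (hT : IsCompactOperator T)
    (S1 : X →L[ℝ] X × Z) (S2 : X × Z →L[ℝ] Y)
    (hfact : S2 ∘L S1 = T) (hS1 : DenseRange S1) (hS2 : IsCompactOperator S2)
    (R1 : X →L[ℝ] W) (R2 : W →L[ℝ] Y) (hR1 : DenseRange R1)
    (hrestr : R2 ∘L R1 = S2 ∘L ContinuousLinearMap.inl ℝ X Z) :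
    (R2 ∘L ContinuousLinearMap.fst ℝ W Z
        + S2 ∘L ContinuousLinearMap.inr ℝ X Z ∘L ContinuousLinearMap.snd ℝ W Z) ∘L
      (((R1 ∘L ContinuousLinearMap.fst ℝ X Z).prod (ContinuousLinearMap.snd ℝ X Z)) ∘L S1)
      = T ∧
    DenseRange
      ((((R1 ∘L ContinuousLinearMap.fst ℝ X Z).prod (ContinuousLinearMap.snd ℝ X Z)) ∘L S1)) := by
  constructor
  · ext x
    have h1 : ∀ a : X, R2 (R1 a) = S2 (a, 0) := fun a =>
      congrArg (fun f : X →L[ℝ] Y => f a) hrestr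
    have h2 : S2 (S1 x) = T x := congrArg (fun f : X →L[ℝ] Y => f x) hfact
    simp only [ContinuousLinearMap.comp_apply, ContinuousLinearMap.add_apply,
      ContinuousLinearMap.prod_apply, ContinuousLinearMap.coe_fst',
      ContinuousLinearMap.coe_snd', ContinuousLinearMap.inr_apply, h1]
    rw [← map_add, Prod.mk_add_mk, add_zero, zero_add, Prod.mk.eta, h2]
  · have hmap : DenseRange (Prod.map R1 id : X × Z → W × Z) :=
      hR1.prodMap denseRange_id
    have : ⇑(((R1 ∘L ContinuousLinearMap.fst ℝ X Z).prod (ContinuousLinearMap.snd ℝ X Z)) ∘L S1)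
        = (Prod.map R1 id) ∘ ⇑S1 := by
      ext x <;> rfl
    rw [this]
    exact hmap.comp hS1 (R1.continuous.prodMap continuous_id)
end
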